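/- arXiv:1412.0193 — 2 statements merged into one kernel-verified Lean document; each statement's English description precedes it below -/
import Mathlib

section
/- For real \alpha_1 > 0 and \alpha_2 > 1, with B_ln(\alpha_1,\alpha_2) = -\int_0^1 x^{\alpha_1-1}(1-x)^{\alpha_2-1} \ln x \, dx, the recurrence B_ln(\alpha_1,\alpha_2) = (1/\alpha_1) B(\alpha_1,\alpha_2) + ((\alpha_2-1)/\alpha_1) B_ln(\alpha_1+1,\alpha_2-1) holds. -/
open Real MeasureTheory Set intervalIntegral

/-- `x^c * log x` is interval integrable on `[0,1]` for `c > -1`. -/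
lemma intInt_rpow_mul_log {c : ℝ} (hc : -1 < c) :
    IntervalIntegrable (fun x : ℝ => x ^ c * Real.log x) volume 0 1 := by
  rw [intervalIntegrable_iff_integrableOn_Ioc_of_le (by norm_num)]
  set ε : ℝ := (c + 1) / 2 with hε
  have hε0 : 0 < ε := by dsimp [ε]; linarith
  have hce : -1 < c - ε := by dsimp [ε]; linarith
  have hg : IntegrableOn (fun x : ℝ => x ^ (c - ε) / ε) (Ioc 0 1) volume := by
    have := (intervalIntegrable_rpow' (a := 0) (b := 1) hce).div_const ε
    rwa [intervalIntegrable_iff_integrableOn_Ioc_of_le (by norm_num)] at this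
  apply Integrable.mono' hg
  · refine ContinuousOn.aestronglyMeasurable ?_ measurableSet_Ioc
    intro x hx
    exact ((Real.continuousAt_rpow_const x c (Or.inl hx.1.ne')).mul
      (Real.continuousAt_log hx.1.ne')).continuousWithinAt
  · filter_upwards [ae_restrict_mem measurableSet_Ioc] with x hx
    have hx0 : 0 < x := hx.1
    have hlog : -Real.log x ≤ x ^ (-ε) / ε := by
      have := Real.log_le_rpow_div (x := x⁻¹) (by positivity) hε0
      rwa [Real.log_inv, ← Real.rpow_neg_one x, ← Real.rpow_mul hx0.le, neg_one_mul] at this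
    have hlogle : Real.log x ≤ 0 := Real.log_nonpos hx0.le hx.2
    have hxc : (0:ℝ) ≤ x ^ c := Real.rpow_nonneg hx0.le c
    calc ‖x ^ c * Real.log x‖ = x ^ c * (-Real.log x) := by
          rw [norm_mul, Real.norm_eq_abs, Real.norm_eq_abs, abs_of_nonneg hxc,
            abs_of_nonpos hlogle]
      _ ≤ x ^ c * (x ^ (-ε) / ε) := by
          exact mul_le_mul_of_nonneg_left hlog hxc
      _ = x ^ (c - ε) / ε := by
          rw [← mul_div_assoc, ← Real.rpow_add hx0]; ring_nf

/-- `(1-x)^d` is interval integrable on `[1/2,1]` for `d > -1`. -/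
lemma intInt_one_sub {d : ℝ} (hd : -1 < d) :
    IntervalIntegrable (fun x : ℝ => (1 - x) ^ d) volume (1 / 2) 1 := by
  have := (intervalIntegrable_rpow' (a := 0) (b := 1 / 2) hd).comp_sub_left 1
  norm_num at this
  exact this.symm

/-- The Beta integrand is interval integrable on `[0,1]`. -/
lemma intInt_beta {c d : ℝ} (hc : -1 < c) (hd : -1 < d) :
    IntervalIntegrable (fun x : ℝ => x ^ c * (1 - x) ^ d) volume 0 1 := by
  apply IntervalIntegrable.trans (b := 1 / 2)
  · apply IntervalIntegrable.mul_continuousOn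
      (intervalIntegrable_rpow' hc)
    intro x hx
    rw [uIcc_of_le (by norm_num : (0:ℝ) ≤ 1 / 2)] at hx
    exact (Real.continuousAt_rpow_const _ _ (Or.inl (by intro h; simp only [Pi.sub_apply, id_eq] at h; linarith [hx.2]))).comp
      ((continuous_const.sub continuous_id).continuousAt) |>.continuousWithinAt
  · apply IntervalIntegrable.continuousOn_mul (intInt_one_sub hd)
    intro x hx
    rw [uIcc_of_le (by norm_num : (1:ℝ) / 2 ≤ 1)] at hx
    exact (Real.continuousAt_rpow_const _ _ (Or.inl (by linarith [hx.1]))).continuousWithinAt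

/-- The logarithmic Beta integrand is interval integrable on `[0,1]`. -/
lemma intInt_beta_log {c d : ℝ} (hc : -1 < c) (hd : -1 < d) :
    IntervalIntegrable (fun x : ℝ => x ^ c * (1 - x) ^ d * Real.log x) volume 0 1 := by
  have heq : (fun x : ℝ => x ^ c * (1 - x) ^ d * Real.log x)
      = fun x : ℝ => (x ^ c * Real.log x) * (1 - x) ^ d := by
    funext x; ring
  rw [heq]
  apply IntervalIntegrable.trans (b := 1 / 2)
  · apply IntervalIntegrable.mul_continuousOn
      ((intInt_rpow_mul_log hc).mono_set (by rw [uIcc_of_le (by norm_num : (0:ℝ) ≤ 1/2),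
        uIcc_of_le (by norm_num : (0:ℝ) ≤ 1)]; exact Icc_subset_Icc le_rfl (by norm_num)))
    intro x hx
    rw [uIcc_of_le (by norm_num : (0:ℝ) ≤ 1 / 2)] at hx
    exact (Real.continuousAt_rpow_const _ _ (Or.inl (by intro h; simp only [Pi.sub_apply, id_eq] at h; linarith [hx.2]))).comp
      ((continuous_const.sub continuous_id).continuousAt) |>.continuousWithinAt
  · apply IntervalIntegrable.continuousOn_mul (intInt_one_sub hd)
    intro x hx
    rw [uIcc_of_le (by norm_num : (1:ℝ) / 2 ≤ 1)] at hx
    have hx0 : (0:ℝ) < x := by linarith [hx.1]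
    exact ((Real.continuousAt_rpow_const _ _ (Or.inl hx0.ne')).mul
      (Real.continuousAt_log hx0.ne')).continuousWithinAt

/-- The recurrence for the logarithmic Beta integral,
`B_ln(α₁,α₂) = (1/α₁) B(α₁,α₂) + ((α₂-1)/α₁) B_ln(α₁+1, α₂-1)`,
for real `α₁ > 0` and `α₂ > 1`, where
`B_ln(a,b) = -∫_0^1 x^{a-1}(1-x)^{b-1} ln x dx` and
`B(a,b) = ∫_0^1 x^{a-1}(1-x)^{b-1} dx`. -/
theorem beta_log_recurrence (a b : ℝ) (ha : 0 < a) (hb : 1 < b) :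
    -∫ x in (0:ℝ)..1, x ^ (a - 1) * (1 - x) ^ (b - 1) * Real.log x
    = (1 / a) * (∫ x in (0:ℝ)..1, x ^ (a - 1) * (1 - x) ^ (b - 1))
      + ((b - 1) / a) *
        (-∫ x in (0:ℝ)..1, x ^ a * (1 - x) ^ (b - 2) * Real.log x) := by
  set F : ℝ → ℝ := fun x => x ^ a * (1 - x) ^ (b - 1) * Real.log x with hF
  set f' : ℝ → ℝ := fun x =>
    a * (x ^ (a - 1) * (1 - x) ^ (b - 1) * Real.log x)
    + x ^ (a - 1) * (1 - x) ^ (b - 1)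
    - (b - 1) * (x ^ a * (1 - x) ^ (b - 2) * Real.log x) with hf'
  -- integrability of the three pieces
  have h1 : IntervalIntegrable (fun x : ℝ => x ^ (a - 1) * (1 - x) ^ (b - 1) * Real.log x)
      volume 0 1 := intInt_beta_log (by linarith) (by linarith)
  have h2 : IntervalIntegrable (fun x : ℝ => x ^ (a - 1) * (1 - x) ^ (b - 1)) volume 0 1 :=
    intInt_beta (by linarith) (by linarith)
  have h3 : IntervalIntegrable (fun x : ℝ => x ^ a * (1 - x) ^ (b - 2) * Real.log x)
      volume 0 1 := intInt_beta_log (by linarith) (by linarith)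
  have hint : IntervalIntegrable f' volume 0 1 :=
    ((h1.const_mul a).add h2).sub (h3.const_mul (b - 1))
  -- continuity of F on [0,1]
  have hcont1sub : Continuous fun x : ℝ => (1 - x) ^ (b - 1) := by
    rw [continuous_iff_continuousAt]
    intro x
    exact (Real.continuousAt_rpow_const _ _ (Or.inr (by linarith))).comp
      ((continuous_const.sub continuous_id).continuousAt)
  have hcontmul : ContinuousOn (fun x : ℝ => x ^ a * Real.log x) (Icc 0 1) := by
    intro x hx
    rcases eq_or_lt_of_le hx.1 with h0 | h0
    · -- x = 0
      subst h0
      have htend : Filter.Tendsto (fun x : ℝ => x ^ a * Real.log x)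
          (nhdsWithin 0 (Ioi 0)) (nhds 0) := by
        have := tendsto_log_mul_rpow_nhdsGT_zero ha
        simpa [mul_comm] using this
      have hval : (0:ℝ) ^ a * Real.log 0 = 0 := by
        rw [Real.zero_rpow ha.ne', zero_mul]
      have h' : ContinuousWithinAt (fun x : ℝ => x ^ a * Real.log x) (Ioi 0) 0 := by
        rw [ContinuousWithinAt, hval]; exact htend
      exact (h'.insert).mono (by
        intro y hy
        rcases eq_or_lt_of_le hy.1 with h | h
        · exact Or.inl h.symm
        · exact Or.inr h)
    · exact ((Real.continuousAt_rpow_const x a (Or.inl h0.ne')).mul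
        (Real.continuousAt_log h0.ne')).continuousWithinAt
  have hcontF : ContinuousOn F (Icc 0 1) := by
    have : ContinuousOn (fun x : ℝ => (x ^ a * Real.log x) * (1 - x) ^ (b - 1)) (Icc 0 1) :=
      hcontmul.mul hcont1sub.continuousOn
    exact this.congr (by intro x hx; dsimp [F]; ring)
  -- derivative on the interior
  have hderiv : ∀ x ∈ Ioo (0:ℝ) 1, HasDerivWithinAt F (f' x) (Ioi x) x := by
    intro x hx
    obtain ⟨hx0, hx1⟩ := hx
    have hne : x ≠ 0 := hx0.ne'
    have hne1 : (1 - x) ≠ 0 := by intro h; apply hx1.ne; linarith [sub_eq_zero.mp h]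
    have d1 : HasDerivAt (fun y : ℝ => y ^ a) (a * x ^ (a - 1)) x :=
      Real.hasDerivAt_rpow_const (Or.inl hne)
    have d2 : HasDerivAt (fun y : ℝ => (1 - y) ^ (b - 1))
        ((b - 1) * (1 - x) ^ (b - 1 - 1) * (-1)) x := by
      have inner : HasDerivAt (fun y : ℝ => 1 - y) (-1) x := by
        simpa using (hasDerivAt_id x).const_sub 1
      exact (Real.hasDerivAt_rpow_const (x := 1 - x) (p := b - 1) (Or.inl hne1)).comp x inner
    have d3 : HasDerivAt Real.log x⁻¹ x := Real.hasDerivAt_log hne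
    have dF : HasDerivAt F
        ((a * x ^ (a - 1) * (1 - x) ^ (b - 1)
          + x ^ a * ((b - 1) * (1 - x) ^ (b - 1 - 1) * (-1))) * Real.log x
          + x ^ a * (1 - x) ^ (b - 1) * x⁻¹) x := (d1.mul d2).mul d3
    have key : (a * x ^ (a - 1) * (1 - x) ^ (b - 1)
          + x ^ a * ((b - 1) * (1 - x) ^ (b - 1 - 1) * (-1))) * Real.log x
          + x ^ a * (1 - x) ^ (b - 1) * x⁻¹ = f' x := by
      have e1 : x ^ a * x⁻¹ = x ^ (a - 1) := by
        rw [Real.rpow_sub_one hne]; ring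
      have e2 : b - 1 - 1 = b - 2 := by ring
      dsimp [f']
      rw [e2, ← e1]
      ring
    rw [← key]
    exact dF.hasDerivWithinAt
  -- FTC
  have hFTC : (∫ x in (0:ℝ)..1, f' x) = F 1 - F 0 :=
    intervalIntegral.integral_eq_sub_of_hasDeriv_right_of_le (by norm_num) hcontF hderiv hint
  have hF1 : F 1 = 0 := by
    dsimp [F]
    rw [show (1:ℝ) - 1 = 0 by ring, Real.zero_rpow (by linarith : b - 1 ≠ 0)]
    simp
  have hF0 : F 0 = 0 := by
    dsimp [F]
    rw [Real.zero_rpow ha.ne']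
    simp
  rw [hF1, hF0, sub_zero] at hFTC
  have hsplit : (∫ x in (0:ℝ)..1, f' x)
      = a * (∫ x in (0:ℝ)..1, x ^ (a - 1) * (1 - x) ^ (b - 1) * Real.log x)
        + (∫ x in (0:ℝ)..1, x ^ (a - 1) * (1 - x) ^ (b - 1))
        - (b - 1) * (∫ x in (0:ℝ)..1, x ^ a * (1 - x) ^ (b - 2) * Real.log x) := by
    rw [show f' = fun x => (a * (x ^ (a - 1) * (1 - x) ^ (b - 1) * Real.log x)
        + x ^ (a - 1) * (1 - x) ^ (b - 1))
        - (b - 1) * (x ^ a * (1 - x) ^ (b - 2) * Real.log x) from rfl]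
    rw [intervalIntegral.integral_sub ((h1.const_mul a).add h2) (h3.const_mul (b - 1)),
      intervalIntegral.integral_add (h1.const_mul a) h2,
      intervalIntegral.integral_const_mul, intervalIntegral.integral_const_mul]
  rw [hsplit] at hFTC
  have ha' : a ≠ 0 := ha.ne'
  field_simp
  linarith [hFTC]
end

section
/- Consider the function q(\tau_1,\tau_2,\tau_3) = (1+\tau_1)/(-\sum_{r=1}^3 \tau_r \ln \tau_r) defined on the open 2-simplex \{\tau_r > 0, \tau_1+\tau_2+\tau_3 = 1\}. Its minimum is attained at \tau^* = (q^2, q, q) with q = \sqrt{2} - 1, i.e., at (3-2\sqrt2, \sqrt2-1, \sqrt2-1); in particular the minimizer satisfies \tau_2 = \tau_3 and \tau_1 = \tau_2^2. -/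
/-- Gibbs-type inequality building block: `x log p - x log x ≤ p - x`. -/
lemma gibbs_aux (x p : ℝ) (hx : 0 < x) (hp : 0 < p) :
    x * Real.log p - x * Real.log x ≤ p - x := by
  have h := Real.log_le_sub_one_of_pos (div_pos hp hx)
  rw [Real.log_div hp.ne' hx.ne'] at h
  have h2 := mul_le_mul_of_nonneg_left h hx.le
  have hxp : x * (p / x) = p := by field_simp
  nlinarith

/-- The function `q(τ) = (1+τ_1)/(-∑_{r=1}^3 τ_r ln τ_r)` on the open 2-simplex
attains its minimum at `τ* = (q², q, q)` with `q = √2 - 1`, i.e., at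
`(3-2√2, √2-1, √2-1)`; in particular the minimizer lies in the simplex and
satisfies `τ_2 = τ_3` and `τ_1 = τ_2²`. -/
theorem scanned_elements_optimal_tau (q : ℝ) (hq : q = Real.sqrt 2 - 1)
    (τs : Fin 3 → ℝ) (hτs : τs = ![q ^ 2, q, q]) :
    (∀ r, 0 < τs r) ∧ (∑ r, τs r = 1) ∧
      ∀ τ : Fin 3 → ℝ, (∀ r, 0 < τ r) → (∑ r, τ r = 1) →
        (1 + τs 0) / (-∑ r, τs r * Real.log (τs r))
          ≤ (1 + τ 0) / (-∑ r, τ r * Real.log (τ r)) := by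
  have hs2 : Real.sqrt 2 ^ 2 = 2 := Real.sq_sqrt (by norm_num)
  have h1 : (1:ℝ) < Real.sqrt 2 := by nlinarith [Real.sqrt_nonneg 2]
  have h2 : Real.sqrt 2 < 3 / 2 := by nlinarith [Real.sqrt_nonneg 2]
  have hq0 : 0 < q := by rw [hq]; linarith
  have hq1 : q < 1 := by rw [hq]; linarith
  have hsum : q ^ 2 + q + q = 1 := by rw [hq]; nlinarith
  have hlogq : Real.log q < 0 := Real.log_neg hq0 hq1
  subst hτs
  have hlogq2 : Real.log (q ^ 2) = 2 * Real.log q := by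
    rw [Real.log_pow]; push_cast; ring
  refine ⟨?_, ?_, ?_⟩
  · intro r; fin_cases r <;> simp <;> positivity
  · simp [Fin.sum_univ_three]; linarith
  · intro τ hpos hsum1
    simp only [Fin.sum_univ_three, Matrix.cons_val_zero, Matrix.cons_val_one,
      Matrix.head_cons, Matrix.cons_val_two, Matrix.tail_cons] at *
    have h0 := hpos 0
    have hp1 := hpos 1
    have hp2 := hpos 2
    -- each τ r < 1
    have ht0 : τ 0 < 1 := by linarith
    have ht1 : τ 1 < 1 := by linarith
    have ht2 : τ 2 < 1 := by linarith
    -- denominators positive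
    have hHs : -(q ^ 2 * Real.log (q ^ 2) + q * Real.log q + q * Real.log q)
        = (1 + q ^ 2) * (-Real.log q) := by
      rw [hlogq2]; nlinarith
    have hHspos : 0 < (1 + q ^ 2) * (-Real.log q) := by
      apply mul_pos <;> nlinarith
    have hH : 0 < -(τ 0 * Real.log (τ 0) + τ 1 * Real.log (τ 1) + τ 2 * Real.log (τ 2)) := by
      have l0 := Real.log_neg h0 ht0
      have l1 := Real.log_neg hp1 ht1
      have l2 := Real.log_neg hp2 ht2
      nlinarith [mul_pos h0 (neg_pos.mpr l0), mul_pos hp1 (neg_pos.mpr l1),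
        mul_pos hp2 (neg_pos.mpr l2)]
    -- Gibbs inequality: H(τ) ≤ (1 + τ 0) * (-log q)
    have g0 := gibbs_aux (τ 0) (q ^ 2) h0 (by positivity)
    have g1 := gibbs_aux (τ 1) q hp1 hq0
    have g2 := gibbs_aux (τ 2) q hp2 hq0
    rw [hlogq2] at g0
    have hkey : -(τ 0 * Real.log (τ 0) + τ 1 * Real.log (τ 1) + τ 2 * Real.log (τ 2))
        ≤ (1 + τ 0) * (-Real.log q) := by nlinarith
    rw [hHs, div_le_div_iff₀ hHspos hH]
    nlinarith [mul_le_mul_of_nonneg_left hkey (by nlinarith : (0:ℝ) ≤ 1 + q ^ 2)]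
end
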